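/- arXiv:1503.06304 — 3 statements merged into one kernel-verified Lean document; each statement's English description precedes it below -/
import Mathlib

section
/- For every integer n ≥ 4, the size-Ramsey number of the complete 3-uniform hypergraph on n vertices satisfies R̂(K_n^(3)) ≥ (n²/96)·C(R(K_n^(3)), 2), where R(K_n^(3)) is the Ramsey number of K_n^(3) and C(·,2) denotes the binomial coefficient. -/
/-- A `k`-uniform hypergraph on a finite vertex set of naturals:
each edge is a `k`-element subset of the vertex set. -/
structure KHypergraph (k : ℕ) where
  verts : Finset ℕ
  edges : Finset (Finset ℕ)
  card_eq : ∀ e ∈ edges, e.card = k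
  subset_verts : ∀ e ∈ edges, e ⊆ verts

namespace KHypergraph

/-- `H.IsCopy G f` : the injection `f` embeds `G` into `H` as a subhypergraph. -/
def IsCopy {k : ℕ} (H G : KHypergraph k) (f : ℕ → ℕ) : Prop :=
  Set.InjOn f ↑G.verts ∧ Set.MapsTo f ↑G.verts ↑H.verts ∧
    ∀ e ∈ G.edges, e.image f ∈ H.edges

/-- `H.Arrows G` : every 2-coloring of the edges of `H` yields a monochromatic copy of `G`. -/
def Arrows {k : ℕ} (H G : KHypergraph k) : Prop :=
  ∀ χ : Finset ℕ → Bool, ∃ (f : ℕ → ℕ) (c : Bool),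
    H.IsCopy G f ∧ ∀ e ∈ G.edges, χ (e.image f) = c

/-- The size-Ramsey number `R̂(G)`: the least number of edges of a hypergraph `H` with `H → G`. -/
noncomputable def sizeRamsey {k : ℕ} (G : KHypergraph k) : ℕ :=
  sInf { m | ∃ H : KHypergraph k, H.Arrows G ∧ H.edges.card = m }

/-- The complete `k`-uniform hypergraph on `N` vertices. -/
def completeHG (k N : ℕ) : KHypergraph k where
  verts := Finset.range N
  edges := Finset.powersetCard k (Finset.range N)
  card_eq := fun _ he => (Finset.mem_powersetCard.mp he).2
  subset_verts := fun _ he => (Finset.mem_powersetCard.mp he).1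

/-- The Ramsey number `R(G)`: the least `N` with `K_N^(k) → G`. -/
noncomputable def ramsey {k : ℕ} (G : KHypergraph k) : ℕ :=
  sInf { N | (completeHG k N).Arrows G }

end KHypergraph

/-!
Let `H` be an edge-minimal hypergraph with `H → K_n^(3)`, and let `∂H` be its shadow graph.

Every pair `{x, y}` of `∂H`, say inside the edge `e₀`, lies in at least `(n - 2)²` edges.
Take a colouring `χ` of `H - e₀` with no monochromatic `K_n^(3)`, and for a vertex set `U`
recolour the triples `{x, y, w}` red iff `w ∉ U`. Then `H` has a monochromatic `K_n^(3)`, which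
must pass through `x` and `y`; its other `n - 2` vertices form a red set avoiding `U` or a blue set
inside `U`. A red and a blue such set share at most one vertex, as `χ` colours the triples
`{x, w, w'}` inside them. Letting `U` be the union of the red sets found so far yields `n - 2`
disjoint red sets, hence `(n - 2)²` vertices `w` with `{x, y, w} ∈ H`.

A proper colouring of `∂H` with `m` colours pulls colourings of `K_m^(3)` back to `H`, so
`m ≥ R(K_n^(3))`; in a proper colouring with the fewest colours every two colour classes are
joined by an edge, so `|∂H| ≥ C(R, 2)`. Counting incidences between pairs and edges,
`3 |E(H)| ≥ C(R, 2) (n - 2)² ≥ C(R, 2) n² / 4`.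
-/

namespace KHypergraph

open Finset

variable {k : ℕ}

def shadow (H : KHypergraph k) : Finset (Finset ℕ) :=
  H.edges.biUnion (powersetCard 2)

theorem mem_shadow {H : KHypergraph k} {p : Finset ℕ} :
    p ∈ H.shadow ↔ ∃ e ∈ H.edges, p ⊆ e ∧ #p = 2 := by
  simp only [shadow, mem_biUnion, mem_powersetCard]

def deleteEdge (H : KHypergraph k) (e₀ : Finset ℕ) : KHypergraph k where
  verts := H.verts
  edges := H.edges.erase e₀
  card_eq e he := H.card_eq e (mem_of_mem_erase he)
  subset_verts e he := H.subset_verts e (mem_of_mem_erase he)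

theorem sum_card_filter_superset_shadow (H : KHypergraph k) :
    ∑ p ∈ H.shadow, #{e ∈ H.edges | p ⊆ e} = k.choose 2 * #H.edges := by
  have hdouble := sum_card_bipartiteAbove_eq_sum_card_bipartiteBelow (s := H.shadow)
    (t := H.edges) (r := fun p e => p ⊆ e)
  simp only [bipartiteAbove, bipartiteBelow] at hdouble
  rw [hdouble, mul_comm, ← smul_eq_mul, ← sum_const]
  refine sum_congr rfl fun e he => ?_
  rw [show k.choose 2 = #(e.powersetCard 2) by rw [card_powersetCard, H.card_eq e he]]
  congr 1
  ext p
  simp only [mem_filter, mem_shadow, mem_powersetCard]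
  exact ⟨fun ⟨⟨_, _, _, hp⟩, hpe⟩ => ⟨hpe, hp⟩, fun ⟨hpe, hp⟩ => ⟨⟨e, he, hpe, hp⟩, hpe⟩⟩

def IsMonoClique (H : KHypergraph k) (χ : Finset ℕ → Bool) (c : Bool) (T : Finset ℕ) :
    Prop :=
  T ⊆ H.verts ∧ ∀ t ⊆ T, #t = k → t ∈ H.edges ∧ χ t = c

theorem arrows_completeHG_iff {H : KHypergraph k} {n : ℕ} :
    H.Arrows (completeHG k n) ↔ ∀ χ, ∃ T c, #T = n ∧ H.IsMonoClique χ c T := by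
  constructor
  · intro harr χ
    obtain ⟨f, c, ⟨hinj, hmaps, hedge⟩, hmono⟩ := harr χ
    change Set.InjOn f (range n : Set ℕ) at hinj
    refine ⟨(range n).image f, c, by rw [card_image_of_injOn hinj, card_range],
      fun v hv => ?_, fun t ht htk => ?_⟩
    · obtain ⟨a, ha, rfl⟩ := mem_image.1 hv
      exact hmaps (mem_coe.2 ha)
    · obtain ⟨s, hs, rfl⟩ := subset_image_iff.1 ht
      rw [card_image_of_injOn (hinj.mono (coe_subset.2 hs))] at htk
      have hs' : s ∈ (completeHG k n).edges := mem_powersetCard.2 ⟨hs, htk⟩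
      exact ⟨hedge s hs', hmono s hs'⟩
  · intro h χ
    obtain ⟨T, c, hT, hTV, hmono⟩ := h χ
    obtain ⟨f, hf⟩ : ∃ f : ℕ → ℕ, Set.BijOn f (range n : Set ℕ) (T : Set ℕ) :=
      (range n).finite_toSet.exists_bijOn_of_encard_eq
        (by simp only [Set.encard_coe_eq_coe_finsetCard, hT, card_range])
    have hclique : ∀ e ∈ (completeHG k n).edges, e.image f ∈ H.edges ∧ χ (e.image f) = c := by
      intro e he
      obtain ⟨hen, hek⟩ := mem_powersetCard.1 he
      refine hmono _ (fun v hv => ?_) ?_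
      · obtain ⟨a, ha, rfl⟩ := mem_image.1 hv
        exact hf.mapsTo (mem_coe.2 (hen ha))
      · rw [card_image_of_injOn (hf.injOn.mono (coe_subset.2 hen)), hek]
    exact ⟨f, c, ⟨hf.injOn, fun a ha => hTV (hf.mapsTo ha), fun e he => (hclique e he).1⟩,
      fun e he => (hclique e he).2⟩

def IsShadowColoring (H : KHypergraph k) (m : ℕ) (φ : ℕ → ℕ) : Prop :=
  (∀ v, φ v < m) ∧ ∀ e ∈ H.edges, Set.InjOn φ e

theorem exists_isShadowColoring (H : KHypergraph k) : ∃ m φ, H.IsShadowColoring m φ := by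
  refine ⟨H.verts.sup id + 1, (· % (H.verts.sup id + 1)),
    fun v => Nat.mod_lt _ (Nat.succ_pos _), fun e he u hu w hw huw => ?_⟩
  have hid : ∀ v ∈ e, v % (H.verts.sup id + 1) = v := fun v hv =>
    Nat.mod_eq_of_lt (Nat.lt_succ_of_le (le_sup (f := id) (H.subset_verts e he hv)))
  simp only at huw
  rwa [hid u hu, hid w hw] at huw

/-- Merging colour `j` into `i` and renaming the top colour `m` to `j` saves one colour. -/
theorem IsShadowColoring.merge {H : KHypergraph k} {m i j : ℕ} {φ : ℕ → ℕ}
    (hφ : H.IsShadowColoring (m + 1) φ) (hij : i < j) (hjm : j ≤ m)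
    (hno : ∀ e ∈ H.edges, ∀ u ∈ e, ∀ w ∈ e, φ u = i → φ w ≠ j) :
    H.IsShadowColoring m (fun v => if φ v = j then i else if φ v = m then j else φ v) := by
  refine ⟨fun v => ?_, fun e he u hu w hw huw => ?_⟩
  · have := hφ.1 v
    dsimp only
    split_ifs <;> omega
  · have hcases : φ u = φ w ∨ (φ u = i ∧ φ w = j) ∨ (φ u = j ∧ φ w = i) := by
      have := hφ.1 u
      have := hφ.1 w
      simp only at huw
      split_ifs at huw <;> omega
    rcases hcases with h | ⟨hu', hw'⟩ | ⟨hu', hw'⟩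
    · exact hφ.2 e he hu hw h
    · exact absurd hw' (hno e he u hu w hw hu')
    · exact absurd hu' (hno e he w hw u hu hw')

theorem exists_isShadowColoring_choose_two_le_card_shadow (H : KHypergraph k) :
    ∃ m φ, H.IsShadowColoring m φ ∧ m.choose 2 ≤ #H.shadow := by
  classical
  have hex := H.exists_isShadowColoring
  obtain ⟨φ, hφ⟩ := Nat.find_spec hex
  refine ⟨Nat.find hex, φ, hφ, ?_⟩
  rw [← card_range (Nat.find hex), ← card_powersetCard]
  refine card_le_card_of_surjOn (image φ) fun q hq => ?_
  obtain ⟨hqm, hq2⟩ := mem_powersetCard.1 hq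
  obtain ⟨a, b, hab, rfl⟩ := card_eq_two.1 hq2
  suffices ∃ e ∈ H.edges, ∃ u ∈ e, ∃ w ∈ e, φ u = a ∧ φ w = b by
    obtain ⟨e, he, u, hu, w, hw, rfl, rfl⟩ := this
    have huw : u ≠ w := fun h => hab (h ▸ rfl)
    exact ⟨{u, w}, mem_shadow.2 ⟨e, he, insert_subset hu (singleton_subset_iff.2 hw),
      card_pair huw⟩, by simp [image_insert]⟩
  have hbm : b < Nat.find hex := mem_range.1 (hqm (by simp))
  have ham : a < Nat.find hex := mem_range.1 (hqm (by simp))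
  clear hq hqm hq2
  wlog hlt : a < b generalizing a b
  · obtain ⟨e, he, u, hu, w, hw, hu', hw'⟩ := this b a hab.symm ham hbm (by omega)
    exact ⟨e, he, w, hw, u, hu, hw', hu'⟩
  by_contra! hno
  obtain ⟨m, hm⟩ : ∃ m, Nat.find hex = m + 1 := ⟨Nat.find hex - 1, by omega⟩
  rw [hm] at hφ hbm
  exact Nat.find_min hex (by omega : m < Nat.find hex) ⟨_, hφ.merge hlt (by omega) hno⟩

theorem ramsey_completeHG_le_of_isShadowColoring {H : KHypergraph k} {n m : ℕ} {φ : ℕ → ℕ}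
    (hk : 2 ≤ k) (hkn : k ≤ n) (harr : H.Arrows (completeHG k n))
    (hφ : H.IsShadowColoring m φ) : ramsey (completeHG k n) ≤ m := by
  refine Nat.sInf_le (arrows_completeHG_iff.2 fun σ => ?_)
  obtain ⟨T, c, hT, -, hmono⟩ := arrows_completeHG_iff.1 harr (fun s => σ (s.image φ))
  have hinj : Set.InjOn φ T := by
    intro a ha b hb hab
    by_contra hne
    obtain ⟨t, hpair, htT, htk⟩ := exists_subsuperset_card_eq (n := k)
      (insert_subset ha (singleton_subset_iff.2 hb)) (by rwa [card_pair hne]) (by rwa [hT])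
    exact hne (hφ.2 t (hmono t htT htk).1 (hpair (by simp)) (hpair (by simp)) hab)
  have hrange : T.image φ ⊆ range m := fun v hv => by
    obtain ⟨a, -, rfl⟩ := mem_image.1 hv
    exact mem_range.2 (hφ.1 a)
  refine ⟨T.image φ, c, by rw [card_image_of_injOn hinj, hT], hrange, fun t ht htk => ?_⟩
  obtain ⟨s, hs, rfl⟩ := subset_image_iff.1 ht
  refine ⟨mem_powersetCard.2 ⟨(image_subset_image hs).trans hrange, htk⟩, ?_⟩
  rw [card_image_of_injOn (hinj.mono (coe_subset.2 hs))] at htk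
  exact (hmono s hs htk).2

theorem choose_two_ramsey_le_card_shadow {H : KHypergraph k} {n : ℕ} (hk : 2 ≤ k)
    (hkn : k ≤ n) (harr : H.Arrows (completeHG k n)) :
    (ramsey (completeHG k n)).choose 2 ≤ #H.shadow := by
  obtain ⟨m, φ, hφ, hm⟩ := H.exists_isShadowColoring_choose_two_le_card_shadow
  exact (Nat.choose_le_choose 2
    (ramsey_completeHG_le_of_isShadowColoring hk hkn harr hφ)).trans hm

theorem exists_arrows_card_edges_eq_sizeRamsey {G : KHypergraph k} (h : ∃ H : KHypergraph k, H.Arrows G) :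
    ∃ H : KHypergraph k, H.Arrows G ∧ #H.edges = sizeRamsey G ∧
      ∀ e₀ ∈ H.edges, ¬(H.deleteEdge e₀).Arrows G := by
  obtain ⟨H, harr⟩ := h
  obtain ⟨H, harr, hcard⟩ :=
    Nat.sInf_mem (s := {m | ∃ H : KHypergraph k, H.Arrows G ∧ #H.edges = m}) ⟨_, H, harr, rfl⟩
  refine ⟨H, harr, hcard, fun e₀ he₀ harr' => ?_⟩
  have hle : sizeRamsey G ≤ #(H.edges.erase e₀) := Nat.sInf_le ⟨_, harr', rfl⟩
  have hlt := card_erase_lt_of_mem he₀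
  rw [sizeRamsey] at hle
  omega

theorem ramsey_eq_zero_of_not_exists_arrows {G : KHypergraph k}
    (h : ¬∃ H : KHypergraph k, H.Arrows G) : ramsey G = 0 :=
  Nat.sInf_eq_zero.2 (.inr (Set.eq_empty_of_forall_notMem fun _ hN => h ⟨_, hN⟩))

/-- `R` is the rest of a monochromatic `K_n^(3)` through `x` and `y`; of its colours only those
of the triples `{x, w, w'}` are recorded. -/
def IsFanRemainder (H : KHypergraph 3) (χ : Finset ℕ → Bool) (n x y : ℕ) (c : Bool)
    (R : Finset ℕ) : Prop :=
  #R = n - 2 ∧ x ∉ R ∧ y ∉ R ∧ (∀ w ∈ R, {x, y, w} ∈ H.edges) ∧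
    ∀ w ∈ R, ∀ w' ∈ R, w ≠ w' → χ {x, w, w'} = c

def fanRecolor (χ : Finset ℕ → Bool) (x y : ℕ) (U s : Finset ℕ) : Bool :=
  if x ∈ s ∧ y ∈ s then decide (Disjoint s U) else χ s

section FanRemainder

variable {H : KHypergraph 3} {n : ℕ} {χ : Finset ℕ → Bool} {x y : ℕ}

theorem IsFanRemainder.card_inter_le_one {R R' : Finset ℕ}
    (hR : IsFanRemainder H χ n x y true R) (hR' : IsFanRemainder H χ n x y false R') :
    #(R ∩ R') ≤ 1 := by
  by_contra! h
  obtain ⟨w, hw, w', hw', hne⟩ := one_lt_card.1 h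
  rw [mem_inter] at hw hw'
  have hcol := hR.2.2.2.2 w hw.1 w' hw'.1 hne
  rw [hR'.2.2.2.2 w hw.2 w' hw'.2 hne] at hcol
  exact Bool.false_ne_true hcol

theorem exists_isFanRemainder {e₀ : Finset ℕ} (harr : H.Arrows (completeHG 3 n))
    (hχ : ∀ T c, #T = n → ¬(H.deleteEdge e₀).IsMonoClique χ c T)
    (hx : x ∈ e₀) (hy : y ∈ e₀) (hxy : x ≠ y) (U : Finset ℕ) (hxU : x ∉ U) (hyU : y ∉ U) :
    ∃ R, (IsFanRemainder H χ n x y true R ∧ Disjoint R U) ∨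
      (IsFanRemainder H χ n x y false R ∧ R ⊆ U) := by
  obtain ⟨T, c, hT, hTV, hmono⟩ := arrows_completeHG_iff.1 harr (fanRecolor χ x y U)
  have hxyT : x ∈ T ∧ y ∈ T := by
    by_contra hxyT
    refine hχ T c hT ⟨hTV, fun t htT ht3 => ?_⟩
    have hnot : ¬(x ∈ t ∧ y ∈ t) := fun h => hxyT ⟨htT h.1, htT h.2⟩
    obtain ⟨hedge, hcol⟩ := hmono t htT ht3
    refine ⟨mem_erase.2 ⟨fun h => hnot (h ▸ ⟨hx, hy⟩), hedge⟩, ?_⟩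
    rwa [fanRecolor, if_neg hnot] at hcol
  have hmemR : ∀ w ∈ T \ {x, y}, w ∈ T ∧ w ≠ x ∧ w ≠ y := fun w hw => by
    simpa using hw
  have hfan : ∀ w ∈ T \ {x, y}, {x, y, w} ∈ H.edges ∧ decide (w ∉ U) = c := fun w hw => by
    obtain ⟨hwT, hwx, hwy⟩ := hmemR w hw
    obtain ⟨hedge, hcol⟩ := hmono {x, y, w} (by simp [insert_subset_iff, hxyT, hwT])
      (card_eq_three.2 ⟨x, y, w, hxy, hwx.symm, hwy.symm, rfl⟩)
    rw [fanRecolor, if_pos (by simp)] at hcol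
    refine ⟨hedge, ?_⟩
    rw [← hcol]
    simp [disjoint_insert_left, hxU, hyU]
  have hR : IsFanRemainder H χ n x y c (T \ {x, y}) := by
    refine ⟨?_, by simp, by simp, fun w hw => (hfan w hw).1, fun w hw w' hw' hne => ?_⟩
    · rw [card_sdiff_of_subset (by simp [insert_subset_iff, hxyT]), hT, card_pair hxy]
    obtain ⟨hwT, hwx, hwy⟩ := hmemR w hw
    obtain ⟨hw'T, hw'x, hw'y⟩ := hmemR w' hw'
    have hnot : ¬(x ∈ ({x, w, w'} : Finset ℕ) ∧ y ∈ ({x, w, w'} : Finset ℕ)) := by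
      simp [hxy.symm, hwy.symm, hw'y.symm]
    have hcol := (hmono {x, w, w'} (by simp [insert_subset_iff, hxyT, hwT, hw'T])
      (card_eq_three.2 ⟨x, w, w', hwx.symm, hw'x.symm, hne, rfl⟩)).2
    rwa [fanRecolor, if_neg hnot] at hcol
  cases c
  · exact ⟨_, .inr ⟨hR, fun w hw => by simpa using (hfan w hw).2⟩⟩
  · exact ⟨_, .inl ⟨hR, disjoint_left.2 fun w hw => by simpa using (hfan w hw).2⟩⟩

theorem exists_pairwiseDisjoint_isFanRemainder {e₀ : Finset ℕ}
    (harr : H.Arrows (completeHG 3 n))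
    (hχ : ∀ T c, #T = n → ¬(H.deleteEdge e₀).IsMonoClique χ c T)
    (hx : x ∈ e₀) (hy : y ∈ e₀) (hxy : x ≠ y) (j : ℕ) (hj : j ≤ n - 2) :
    ∃ F : Finset (Finset ℕ), #F = j ∧ (∀ R ∈ F, IsFanRemainder H χ n x y true R) ∧
      (F : Set (Finset ℕ)).PairwiseDisjoint id := by
  induction j with
  | zero => exact ⟨∅, rfl, by simp, by simp⟩
  | succ j ih =>
    obtain ⟨F, hF, hFrem, hFdisj⟩ := ih (by omega)
    have hsubU : ∀ R ∈ F, R ⊆ F.biUnion id := fun R hR => subset_biUnion_of_mem id hR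
    have hxU : x ∉ F.biUnion id := by
      simpa using fun R hR => (hFrem R hR).2.1
    have hyU : y ∉ F.biUnion id := by
      simpa using fun R hR => (hFrem R hR).2.2.1
    obtain ⟨R, ⟨hR, hRU⟩ | ⟨hR, hRU⟩⟩ :=
      exists_isFanRemainder harr hχ hx hy hxy (F.biUnion id) hxU hyU
    · have hRF : R ∉ F := fun hRF => by
        have hRempty := disjoint_self.1 (hRU.mono_right (hsubU R hRF))
        have := hR.1
        simp only [hRempty, bot_eq_empty, card_empty] at this
        omega
      refine ⟨insert R F, by rw [card_insert_of_notMem hRF, hF], ?_, ?_⟩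
      · simpa only [mem_insert, forall_eq_or_imp] using ⟨hR, hFrem⟩
      · rw [coe_insert]
        exact hFdisj.insert fun R' hR' _ => hRU.mono_right (hsubU R' hR')
    · exfalso
      have hRj : #R ≤ j := calc
        #R = #(F.biUnion (R ∩ ·)) := by
          rw [← inter_biUnion]
          exact congrArg card (inter_eq_left.2 hRU).symm
        _ ≤ ∑ R' ∈ F, #(R ∩ R') := card_biUnion_le
        _ ≤ ∑ _R' ∈ F, 1 := sum_le_sum fun R' hR' => by
          rw [inter_comm]
          exact (hFrem R' hR').card_inter_le_one hR
        _ = j := by rw [sum_const, smul_eq_mul, mul_one, hF]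
      have := hR.1
      omega

theorem mul_sub_two_le_card_filter_pair_subset {e₀ : Finset ℕ}
    (harr : H.Arrows (completeHG 3 n)) (hmin : ¬(H.deleteEdge e₀).Arrows (completeHG 3 n))
    (hx : x ∈ e₀) (hy : y ∈ e₀) (hxy : x ≠ y) :
    (n - 2) * (n - 2) ≤ #{e ∈ H.edges | {x, y} ⊆ e} := by
  obtain ⟨χ, hχ⟩ : ∃ χ, ∀ T c, #T = n → ¬(H.deleteEdge e₀).IsMonoClique χ c T := by
    simpa only [arrows_completeHG_iff, not_forall, not_exists, not_and] using hmin
  obtain ⟨F, hF, hFrem, hFdisj⟩ :=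
    exists_pairwiseDisjoint_isFanRemainder harr hχ hx hy hxy (n - 2) le_rfl
  have hU : ∀ w ∈ F.biUnion id, w ≠ x ∧ w ≠ y ∧ {x, y, w} ∈ H.edges := fun w hw => by
    obtain ⟨R, hR, hwR⟩ := mem_biUnion.1 hw
    obtain ⟨-, hxR, hyR, hfan, -⟩ := hFrem R hR
    exact ⟨fun h => hxR (h ▸ hwR), fun h => hyR (h ▸ hwR), hfan w hwR⟩
  have hinj : Set.InjOn (fun w => ({x, y, w} : Finset ℕ)) (F.biUnion id) := by
    intro w hw w' hw' h
    have hmem : w ∈ ({x, y, w'} : Finset ℕ) := by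
      simp only at h
      rw [← h]
      simp
    simpa [(hU w hw).1, (hU w hw).2.1] using hmem
  calc (n - 2) * (n - 2) = #(F.biUnion id) := by
        rw [card_biUnion hFdisj,
          sum_const_nat (f := fun R => #(id R)) fun R hR => (hFrem R hR).1, hF]
    _ = #((F.biUnion id).image fun w => {x, y, w}) := (card_image_of_injOn hinj).symm
    _ ≤ #{e ∈ H.edges | {x, y} ⊆ e} := card_le_card fun e he => by
        obtain ⟨w, hw, rfl⟩ := mem_image.1 he
        exact mem_filter.2 ⟨(hU w hw).2.2, by simp [insert_subset_iff]⟩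

end FanRemainder

theorem choose_two_ramsey_mul_le_three_mul_card_edges {H : KHypergraph 3} {n : ℕ} (hn : 3 ≤ n)
    (harr : H.Arrows (completeHG 3 n))
    (hmin : ∀ e₀ ∈ H.edges, ¬(H.deleteEdge e₀).Arrows (completeHG 3 n)) :
    (ramsey (completeHG 3 n)).choose 2 * ((n - 2) * (n - 2)) ≤ 3 * #H.edges :=
  calc (ramsey (completeHG 3 n)).choose 2 * ((n - 2) * (n - 2))
      ≤ #H.shadow * ((n - 2) * (n - 2)) :=
        Nat.mul_le_mul_right _ (choose_two_ramsey_le_card_shadow (by norm_num) hn harr)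
    _ = ∑ _p ∈ H.shadow, (n - 2) * (n - 2) := by rw [sum_const, smul_eq_mul]
    _ ≤ ∑ p ∈ H.shadow, #{e ∈ H.edges | p ⊆ e} := sum_le_sum fun p hp => by
        obtain ⟨e₀, he₀, hpe₀, hp⟩ := mem_shadow.1 hp
        obtain ⟨x, y, hxy, rfl⟩ := card_eq_two.1 hp
        exact mul_sub_two_le_card_filter_pair_subset harr (hmin e₀ he₀) (hpe₀ (by simp))
          (hpe₀ (by simp)) hxy
    _ = 3 * #H.edges := sum_card_filter_superset_shadow H

end KHypergraph

/-- For `n ≥ 4`,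
`R̂(K_n^(3)) ≥ (n²/96)·C(R(K_n^(3)), 2)`. -/
theorem stmt0 (n : ℕ) (hn : 4 ≤ n) :
    ((n : ℝ) ^ 2 / 96) * ((KHypergraph.ramsey (KHypergraph.completeHG 3 n)).choose 2 : ℝ) ≤
      (KHypergraph.sizeRamsey (KHypergraph.completeHG 3 n) : ℝ) := by
  open KHypergraph in
  by_cases hex : ∃ H : KHypergraph 3, H.Arrows (completeHG 3 n)
  · obtain ⟨H, harr, hcard, hmin⟩ := exists_arrows_card_edges_eq_sizeRamsey hex
    set C : ℕ := (ramsey (completeHG 3 n)).choose 2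
    have hbound : (C : ℝ) * ((n - 2) * (n - 2)) ≤ 3 * H.edges.card := by
      have := choose_two_ramsey_mul_le_three_mul_card_edges (by omega) harr hmin
      rw [← Nat.cast_le (α := ℝ)] at this
      push_cast [Nat.cast_sub (by omega : 2 ≤ n)] at this
      exact this
    have hsq : (n : ℝ) ^ 2 ≤ 4 * ((n - 2) * (n - 2)) := by
      have : (4 : ℝ) ≤ n := by exact_mod_cast hn
      nlinarith
    rw [← hcard]
    calc (n : ℝ) ^ 2 / 96 * C ≤ 4 * ((n - 2) * (n - 2)) / 96 * C := by gcongr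
      _ = C * ((n - 2) * (n - 2)) / 24 := by ring
      _ ≤ 3 * H.edges.card / 24 := by gcongr
      _ ≤ H.edges.card := by linarith [(H.edges.card.cast_nonneg : (0 : ℝ) ≤ _)]
  · rw [ramsey_eq_zero_of_not_exists_arrows hex]
    simp
end

section
/- For all fixed integers 1 ≤ ℓ < k there exists a constant C = C(k, ℓ) > 0 such that for every n and every k-uniform ℓ-tree T on n vertices, R̂(T) ≤ C·n^{ℓ+1}. -/
/-- `IsLTree k ℓ T` : `T` is a `k`-uniform `ℓ`-tree, i.e. its edges can be ordered
`e₀, …, e_{m−1}` so that each later edge meets the union of the previous ones in at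
most `ℓ` vertices, all of which lie in a single previous edge; the vertex set is
the union of the edges. -/
def IsLTree (k ℓ : ℕ) (T : KHypergraph k) : Prop :=
  T.verts = T.edges.biUnion id ∧
  ∃ (m : ℕ) (e : Fin m → Finset ℕ),
    Function.Injective e ∧
    T.edges = Finset.image e Finset.univ ∧
    ∀ j : Fin m, 0 < (j : ℕ) →
      (e j ∩ (Finset.univ.filter fun i => i < j).biUnion e).card ≤ ℓ ∧
      ∃ i : Fin m, i < j ∧ e j ∩ (Finset.univ.filter fun i => i < j).biUnion e ⊆ e i

/-!
Take a finite field `F` with `q` elements and the `k`-graph on `Fin k × F` whose edges are the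
graphs `{(i, p (x i))}` of the `q ^ (ℓ + 1)` polynomials `p` of degree at most `ℓ`, where
`x : Fin k ↪ F`. Prescribing `t ≤ ℓ + 1` values fixes `t` coefficients, so a set of `t` vertices
lies in at most `q ^ (ℓ + 1 - t)` edges.

In a 2-colouring some colour class has at least `q ^ (ℓ + 1) / 2` edges. Greedily discarding the
edges through sets `S` with `#S ≤ ℓ` whose codegree is at most `n * q ^ (ℓ - #S)` costs
`O(n q ^ ℓ)` edges, fewer than half once `q ≫ n`, so a nonempty subfamily survives in which every
covered `S` has codegree above `n * q ^ (ℓ - #S)`. At most `#U * q ^ (ℓ - #S)` of these edges meet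
a set `U` outside `S`, so every covered `S` extends to an edge avoiding any `n` given vertices,
and an `ℓ`-tree on `n` vertices embeds edge by edge. Bertrand's postulate supplies a prime
`q ∈ (K n, 2 K n]` with `K` depending only on `k` and `ℓ`, so
`R̂(T) ≤ q ^ (ℓ + 1) ≤ (2 K n) ^ (ℓ + 1)`.
-/

open Finset Polynomial

section Interpolation

variable {R : Type*} [CommRing R] {d : ℕ}

noncomputable def toPoly (a : Fin d → R) : R[X] := ((degreeLTEquiv R d).symm a : R[X])

lemma coeff_toPoly (a : Fin d → R) (j : Fin d) : (toPoly a).coeff j = a j :=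
  congrFun ((degreeLTEquiv R d).apply_symm_apply a) j

lemma coeff_toPoly_of_le (a : Fin d → R) {j : ℕ} (hj : d ≤ j) : (toPoly a).coeff j = 0 :=
  coeff_eq_zero_of_degree_lt <|
    (mem_degreeLT.mp ((degreeLTEquiv R d).symm a).2).trans_le (by exact_mod_cast hj)

lemma eq_of_coeff_eq_of_eval_eq [IsDomain R] (T : Finset R) {a b : Fin d → R}
    (hcoeff : ∀ j : Fin d, #T ≤ j → a j = b j)
    (heval : ∀ x ∈ T, (toPoly a).eval x = (toPoly b).eval x) : a = b := by
  have hdeg : (toPoly a - toPoly b).degree < #T := by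
    rw [degree_lt_iff_coeff_zero]
    intro m hm
    rw [coeff_sub]
    by_cases hmd : m < d
    · rw [show m = ((⟨m, hmd⟩ : Fin d) : ℕ) from rfl, coeff_toPoly, coeff_toPoly,
        hcoeff _ hm, sub_self]
    · rw [coeff_toPoly_of_le a (not_lt.mp hmd), coeff_toPoly_of_le b (not_lt.mp hmd), sub_zero]
  have := eq_of_degree_sub_lt_of_eval_finset_eq T hdeg heval
  funext j
  rw [← coeff_toPoly a j, ← coeff_toPoly b j, this]

lemma card_filter_eval_eq_le {F : Type*} [Field F] [Fintype F] [DecidableEq F]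
    (T : Finset F) (y : F → F) :
    #{a : Fin d → F | ∀ x ∈ T, (toPoly a).eval x = y x} ≤ Fintype.card F ^ (d - #T) := by
  let top : (Fin d → F) → Fin (d - #T) → F := fun a r => a ⟨#T + r, by omega⟩
  calc #{a : Fin d → F | ∀ x ∈ T, (toPoly a).eval x = y x}
      ≤ #(univ : Finset (Fin (d - #T) → F)) := by
        refine card_le_card_of_injOn top (fun _ _ => mem_coe.mpr (mem_univ _)) ?_
        intro a ha b hb hab
        simp only [coe_filter, Set.mem_ofPred_eq, mem_univ, true_and] at ha hb
        refine eq_of_coeff_eq_of_eval_eq T (fun j hj => ?_)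
          fun x hx => (ha x hx).trans (hb x hx).symm
        simpa only [top, Nat.add_sub_cancel' hj] using congrFun hab ⟨j - #T, by omega⟩
    _ = Fintype.card F ^ (d - #T) := by simp

end Interpolation

section Codegree

variable {α : Type*} [DecidableEq α]

def codegree (F : Finset (Finset α)) (S : Finset α) : ℕ := #{E ∈ F | S ⊆ E}

def coveredSets (F : Finset (Finset α)) (s : ℕ) : Finset (Finset α) :=
  F.biUnion (powersetCard s)

lemma mem_coveredSets {F : Finset (Finset α)} {s : ℕ} {S : Finset α} :
    S ∈ coveredSets F s ↔ #S = s ∧ ∃ E ∈ F, S ⊆ E := by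
  simp only [coveredSets, mem_biUnion, mem_powersetCard]
  tauto

lemma codegree_mono {F' F : Finset (Finset α)} (h : F' ⊆ F) (S : Finset α) :
    codegree F' S ≤ codegree F S :=
  card_le_card (filter_subset_filter _ h)

lemma coveredSets_mono {F' F : Finset (Finset α)} (h : F' ⊆ F) (s : ℕ) :
    coveredSets F' s ⊆ coveredSets F s :=
  biUnion_subset_biUnion_of_subset_left _ h

lemma card_coveredSets_le {F : Finset (Finset α)} {V : Finset α} (hV : ∀ E ∈ F, E ⊆ V)
    (s : ℕ) : #(coveredSets F s) ≤ #V ^ s := by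
  calc #(coveredSets F s) ≤ #(V.powersetCard s) := by
        refine card_le_card fun S hS => ?_
        obtain ⟨hcard, E, hE, hSE⟩ := mem_coveredSets.mp hS
        exact mem_powersetCard.mpr ⟨hSE.trans (hV E hE), hcard⟩
    _ ≤ #V ^ s := by rw [card_powersetCard]; exact Nat.choose_le_pow _ _

lemma sum_mul_card_coveredSets_le {F : Finset (Finset α)} {V : Finset α} {k q n ℓ : ℕ}
    (hV : ∀ E ∈ F, E ⊆ V) (hk : 0 < k) (hq : 0 < q) (hVkq : #V ≤ k * q) :
    ∑ s ∈ range (ℓ + 1), (n * q ^ (ℓ - s) + 1) * #(coveredSets F s) ≤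
      (ℓ + 1) * ((n + 1) * k ^ ℓ * q ^ ℓ) := by
  refine (sum_le_card_nsmul _ _ ((n + 1) * k ^ ℓ * q ^ ℓ) fun s hs => ?_).trans (by simp)
  have hs : s ≤ ℓ := Nat.lt_succ_iff.mp (mem_range.mp hs)
  have hqs : 1 ≤ q ^ (ℓ - s) := Nat.one_le_pow _ _ hq
  calc (n * q ^ (ℓ - s) + 1) * #(coveredSets F s)
      ≤ (n + 1) * q ^ (ℓ - s) * (k * q) ^ s :=
        Nat.mul_le_mul (by nlinarith)
          ((card_coveredSets_le hV s).trans (Nat.pow_le_pow_left hVkq s))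
    _ = (n + 1) * k ^ s * (q ^ (ℓ - s) * q ^ s) := by ring
    _ ≤ (n + 1) * k ^ ℓ * q ^ ℓ := by
        rw [pow_sub_mul_pow q hs]
        gcongr

/-- Greedy cleaning: discarding the fewer than `δ #S` edges through a deficient covered set `S`
uncovers `S` for good, so each round is paid for by one term of the sum. -/
lemma exists_subset_codegree_ge (δ : ℕ → ℕ) (ℓ : ℕ) (F : Finset (Finset α)) :
    ∃ G ⊆ F, (∀ S : Finset α, #S ≤ ℓ → (∃ E ∈ G, S ⊆ E) → δ #S ≤ codegree G S) ∧
      #F ≤ #G + ∑ s ∈ range (ℓ + 1), δ s * #(coveredSets F s) := by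
  induction F using Finset.strongInduction with
  | H F ih =>
  by_cases hgood : ∀ S : Finset α, #S ≤ ℓ → (∃ E ∈ F, S ⊆ E) → δ #S ≤ codegree F S
  · exact ⟨F, Subset.rfl, hgood, Nat.le_add_right _ _⟩
  push Not at hgood
  obtain ⟨S, hSℓ, ⟨E, hEF, hSE⟩, hlow⟩ := hgood
  set F' := {E ∈ F | ¬S ⊆ E}
  have hF' : F' ⊂ F := filter_ssubset.mpr ⟨E, hEF, not_not.mpr hSE⟩
  obtain ⟨G, hGF', hG, hbound⟩ := ih F' hF'
  refine ⟨G, hGF'.trans hF'.subset, hG, ?_⟩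
  have hsplit : codegree F S + #F' = #F := card_filter_add_card_filter_not _
  have hcovered : ∀ s ∈ range (ℓ + 1),
      #(coveredSets F' s) + (if s = #S then 1 else 0) ≤ #(coveredSets F s) := by
    intro s _
    split_ifs with hs
    · subst hs
      refine card_lt_card ((ssubset_iff_of_subset (coveredSets_mono hF'.subset _)).mpr
        ⟨S, mem_coveredSets.mpr ⟨rfl, E, hEF, hSE⟩, fun hS => ?_⟩)
      obtain ⟨-, E', hE', hSE'⟩ := mem_coveredSets.mp hS
      exact (mem_filter.mp hE').2 hSE'
    · exact card_le_card (coveredSets_mono hF'.subset _)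
  have hsum : ∑ s ∈ range (ℓ + 1), δ s * #(coveredSets F' s) + δ #S ≤
      ∑ s ∈ range (ℓ + 1), δ s * #(coveredSets F s) :=
    calc ∑ s ∈ range (ℓ + 1), δ s * #(coveredSets F' s) + δ #S
        = ∑ s ∈ range (ℓ + 1), δ s * (#(coveredSets F' s) + if s = #S then 1 else 0) := by
          simp [mul_add, sum_add_distrib, Nat.lt_succ_of_le hSℓ]
      _ ≤ _ := sum_le_sum fun s hs => Nat.mul_le_mul_left _ (hcovered s hs)
  omega

/-- An edge through `S` that meets `U` outside `S` contains `insert v S` for some `v ∈ U \ S`. -/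
lemma exists_mem_disjoint_sdiff_of_codegree (G : Finset (Finset α)) (S U : Finset α) (D : ℕ)
    (hcod : ∀ v ∉ S, codegree G (insert v S) ≤ D) (hS : #U * D < codegree G S) :
    ∃ E ∈ G, S ⊆ E ∧ Disjoint (E \ S) U := by
  by_contra! hbad
  have hcover : {E ∈ G | S ⊆ E} ⊆ (U \ S).biUnion fun v => {E ∈ G | insert v S ⊆ E} := by
    intro E hE
    obtain ⟨hEG, hSE⟩ := mem_filter.mp hE
    obtain ⟨v, hvE, hvU⟩ := not_disjoint_iff.mp (hbad E hEG hSE)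
    obtain ⟨hvE, hvS⟩ := mem_sdiff.mp hvE
    exact mem_biUnion.mpr ⟨v, mem_sdiff.mpr ⟨hvU, hvS⟩,
      mem_filter.mpr ⟨hEG, insert_subset hvE hSE⟩⟩
  have := (card_le_card hcover).trans <| card_biUnion_le_card_mul _ _ D
    fun v hv => hcod v (mem_sdiff.mp hv).2
  have := Nat.mul_le_mul_right D (card_le_card (sdiff_subset (s := U) (t := S)))
  exact absurd hS (not_lt.mpr (by unfold codegree; omega))

end Codegree

section Embedding

variable {α β : Type*} [DecidableEq α] [DecidableEq β]

lemma exists_extend_injOn [Nonempty β] {V e : Finset α} {E : Finset β} {f : α → β}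
    (hf : Set.InjOn f V) (hcard : #e = #E) (hsub : (e ∩ V).image f ⊆ E)
    (hdisj : Disjoint (E \ (e ∩ V).image f) (V.image f)) :
    ∃ g : α → β, Set.EqOn g f V ∧ Set.InjOn g ↑(V ∪ e) ∧ e.image g = E := by
  set D := e \ V
  set E' := E \ (e ∩ V).image f
  have hDE' : #D = #E' := by
    rw [card_sdiff, card_sdiff_of_subset hsub,
      card_image_of_injOn (hf.mono (by simp)), inter_comm, hcard]
  obtain ⟨φ, hφ⟩ := D.finite_toSet.exists_bijOn_of_encard_eq (t := (E' : Set β))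
    (by simp only [Set.encard_coe_eq_coe_finsetCard, hDE'])
  have hVD : Disjoint V D := disjoint_sdiff
  refine ⟨(D : Set α).piecewise φ f, fun x hx => Set.piecewise_eq_of_notMem _ _ _
    (disjoint_left.mp hVD hx), ?_, ?_⟩
  · rw [← union_sdiff_self_eq_union, coe_union, Set.injOn_union (disjoint_coe.mpr hVD)]
    refine ⟨hf.congr fun x hx => (Set.piecewise_eq_of_notMem _ _ _
      (disjoint_left.mp hVD hx)).symm, hφ.injOn.congr fun x hx =>
      (Set.piecewise_eq_of_mem _ _ _ hx).symm, fun x hx y hy hxy => ?_⟩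
    rw [Set.piecewise_eq_of_notMem _ _ _ (disjoint_left.mp hVD hx),
      Set.piecewise_eq_of_mem _ _ _ hy] at hxy
    exact disjoint_left.mp hdisj (hφ.mapsTo hy) (hxy ▸ mem_image_of_mem f hx)
  · have hDimage : D.image ((D : Set α).piecewise φ f) = E' := by
      rw [← coe_inj, coe_image, (Set.piecewise_eqOn (s := (D : Set α)) φ f).image_eq, hφ.image_eq]
    rw [← sdiff_union_inter e V, image_union, hDimage, union_comm,
      image_congr (f := (D : Set α).piecewise φ f) (g := f) fun x hx =>
        Set.piecewise_eq_of_notMem _ _ _ (disjoint_left.mp hVD (mem_inter.mp hx).2),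
      union_sdiff_of_subset hsub]

def ExtensionProperty (G : Finset (Finset α)) (ℓ n : ℕ) : Prop :=
  ∀ S U : Finset α, #S ≤ ℓ → (∃ E ∈ G, S ⊆ E) → #U ≤ n → ∃ E ∈ G, S ⊆ E ∧ Disjoint (E \ S) U

def prefixUnion {m : ℕ} (e : Fin m → Finset α) (j : ℕ) : Finset α :=
  (univ.filter fun i : Fin m => (i : ℕ) < j).biUnion e

lemma prefixUnion_zero {m : ℕ} (e : Fin m → Finset α) : prefixUnion e 0 = ∅ := by
  simp [prefixUnion]

lemma prefixUnion_succ {m : ℕ} (e : Fin m → Finset α) {j : ℕ} (hj : j < m) :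
    prefixUnion e (j + 1) = prefixUnion e j ∪ e ⟨j, hj⟩ := by
  ext x
  simp only [prefixUnion, mem_biUnion, mem_filter, mem_univ, true_and, mem_union]
  constructor
  · rintro ⟨i, hi, hx⟩
    rcases Nat.lt_succ_iff_lt_or_eq.mp hi with hi | hi
    · exact Or.inl ⟨i, hi, hx⟩
    · exact Or.inr (by rwa [show (⟨j, hj⟩ : Fin m) = i from Fin.ext hi.symm])
  · rintro (⟨i, hi, hx⟩ | hx)
    · exact ⟨i, by omega, hx⟩
    · exact ⟨_, Nat.lt_succ_self j, hx⟩

lemma subset_prefixUnion {m : ℕ} (e : Fin m → Finset α) {i : Fin m} {j : ℕ} (hij : (i : ℕ) < j) :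
    e i ⊆ prefixUnion e j :=
  subset_biUnion_of_mem e (mem_filter.mpr ⟨mem_univ i, hij⟩)

lemma exists_injOn_prefixUnion {k ℓ n m : ℕ} {G : Finset (Finset α)} [Nonempty α]
    (hGk : ∀ E ∈ G, #E = k) (hGne : G.Nonempty) (hG : ExtensionProperty G ℓ n)
    {e : Fin m → Finset α} (he : ∀ i, #(e i) = k) (hn : ∀ j, #(prefixUnion e j) ≤ n)
    (htree : ∀ j : Fin m, 0 < (j : ℕ) → #(e j ∩ prefixUnion e j) ≤ ℓ ∧
      ∃ i : Fin m, i < j ∧ e j ∩ prefixUnion e j ⊆ e i) :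
    ∀ j ≤ m, ∃ f : α → α, Set.InjOn f ↑(prefixUnion e j) ∧
      ∀ i : Fin m, (i : ℕ) < j → (e i).image f ∈ G := by
  intro j hj
  induction j with
  | zero => exact ⟨id, by simp [prefixUnion_zero], fun i hi => absurd hi (Nat.not_lt_zero _)⟩
  | succ j ih =>
  obtain ⟨f, hf, hfG⟩ := ih (by omega)
  set S := e ⟨j, hj⟩ ∩ prefixUnion e j
  have hS : #S ≤ ℓ ∧ ∃ E ∈ G, S.image f ⊆ E := by
    rcases Nat.eq_zero_or_pos j with rfl | hpos
    · obtain ⟨E, hE⟩ := hGne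
      simpa [S, prefixUnion_zero] using ⟨E, hE⟩
    · obtain ⟨hcard, i, hi, hsub⟩ := htree ⟨j, hj⟩ hpos
      exact ⟨hcard, _, hfG i hi, image_subset_image hsub⟩
  obtain ⟨E, hEG, hSE, hdisj⟩ := hG (S.image f) ((prefixUnion e j).image f)
    (card_image_le.trans hS.1) hS.2 (card_image_le.trans (hn j))
  obtain ⟨g, hgf, hg, himage⟩ :=
    exists_extend_injOn hf ((he _).trans (hGk E hEG).symm) hSE hdisj
  refine ⟨g, by rwa [prefixUnion_succ e hj], fun i hi => ?_⟩
  rcases Nat.lt_succ_iff_lt_or_eq.mp hi with hi | hi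
  · rw [image_congr fun x hx => hgf (subset_prefixUnion e hi hx)]
    exact hfG i hi
  · rwa [show i = ⟨j, hj⟩ from Fin.ext hi, himage]

end Embedding

lemma IsLTree.exists_injOn_image_mem {k ℓ n : ℕ} {T : KHypergraph k} (hT : IsLTree k ℓ T)
    (hn : #T.verts ≤ n) {G : Finset (Finset ℕ)} (hGk : ∀ E ∈ G, #E = k) (hGne : G.Nonempty)
    (hG : ExtensionProperty G ℓ n) :
    ∃ f : ℕ → ℕ, Set.InjOn f T.verts ∧ ∀ e ∈ T.edges, e.image f ∈ G := by
  obtain ⟨hverts, m, e, -, hedges, htree⟩ := hT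
  have hmem : ∀ i, e i ∈ T.edges := fun i => hedges ▸ mem_image_of_mem e (mem_univ i)
  have hall : prefixUnion e m = T.verts := by
    rw [hverts, hedges, image_biUnion, prefixUnion]
    simp
  obtain ⟨f, hf, hfG⟩ := exists_injOn_prefixUnion hGk hGne hG (fun i => T.card_eq _ (hmem i))
    (fun j => (card_le_card (biUnion_subset.mpr fun i _ => T.subset_verts _ (hmem i))).trans hn)
    htree m le_rfl
  refine ⟨f, hall ▸ hf, fun e' he' => ?_⟩
  obtain ⟨i, -, rfl⟩ := mem_image.mp (hedges ▸ he')
  exact hfG i i.2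

lemma exists_card_le_two_mul_card_filter {β : Type*} (s : Finset β) (χ : β → Bool) :
    ∃ c : Bool, #s ≤ 2 * #{x ∈ s | χ x = c} := by
  have hsplit := card_filter_add_card_filter_not (s := s) fun x => χ x = true
  simp only [Bool.not_eq_true] at hsplit
  by_cases h : #{x ∈ s | χ x = false} ≤ #{x ∈ s | χ x = true}
  · exact ⟨true, by omega⟩
  · exact ⟨false, by omega⟩

namespace KHypergraph

variable {k : ℕ}

lemma isCopy_of_injOn {H T : KHypergraph k} (hT : T.verts = T.edges.biUnion id) {f : ℕ → ℕ}
    (hf : Set.InjOn f T.verts) (hfE : ∀ e ∈ T.edges, e.image f ∈ H.edges) : H.IsCopy T f := by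
  refine ⟨hf, fun x hx => ?_, hfE⟩
  obtain ⟨e, he, hxe⟩ := mem_biUnion.mp (hT ▸ hx)
  exact H.subset_verts _ (hfE e he) (mem_image_of_mem f hxe)

theorem arrows_of_codegree_le {ℓ n q : ℕ} (hk : 0 < k) (H : KHypergraph k)
    (hV : #H.verts ≤ k * q) (hE : q ^ (ℓ + 1) ≤ #H.edges)
    (hcod : ∀ W : Finset ℕ, codegree H.edges W ≤ q ^ (ℓ + 1 - #W))
    (hq : 2 * (ℓ + 1) * (n + 1) * k ^ ℓ < q) {T : KHypergraph k} (hT : IsLTree k ℓ T)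
    (hn : #T.verts ≤ n) : H.Arrows T := by
  intro χ
  obtain ⟨c, hc⟩ := exists_card_le_two_mul_card_filter H.edges χ
  set F := {E ∈ H.edges | χ E = c}
  have hFH : F ⊆ H.edges := filter_subset _ _
  obtain ⟨G, hGF, hGcod, hFG⟩ := exists_subset_codegree_ge (fun s => n * q ^ (ℓ - s) + 1) ℓ F
  have hq0 : 0 < q := by omega
  have hcost := sum_mul_card_coveredSets_le (n := n) (ℓ := ℓ)
    (fun E hE => H.subset_verts E (hFH hE)) hk hq0 hV
  have hGne : G.Nonempty := by
    rw [nonempty_iff_ne_empty]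
    rintro rfl
    have := Nat.mul_lt_mul_of_pos_right hq (pow_pos hq0 ℓ)
    rw [pow_succ] at hE
    simp only [card_empty] at hFG
    nlinarith
  have hext : ExtensionProperty G ℓ n := by
    intro S U hS hSG hU
    refine exists_mem_disjoint_sdiff_of_codegree G S U (q ^ (ℓ - #S)) (fun v hv => ?_) ?_
    · refine (codegree_mono (hGF.trans hFH) _).trans ((hcod _).trans_eq ?_)
      rw [card_insert_of_notMem hv]
      congr 1
      omega
    · exact (Nat.mul_le_mul_right _ hU).trans_lt (hGcod S hS hSG)
  obtain ⟨f, hf, hfG⟩ := hT.exists_injOn_image_mem hn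
    (fun E hE => H.card_eq E (hFH (hGF hE))) hGne hext
  exact ⟨f, c, isCopy_of_injOn hT.1 hf fun e he => hFH (hGF (hfG e he)),
    fun e he => (mem_filter.mp (hGF (hfG e he))).2⟩

end KHypergraph

section PolynomialHypergraph

variable {F : Type*} [Field F] {k ℓ : ℕ}
  (x : Fin k ↪ F) (enc : Fin k × F ↪ ℕ)

noncomputable def polyEdge (a : Fin (ℓ + 1) → F) : Finset ℕ :=
  univ.image fun i => enc (i, (toPoly a).eval (x i))

lemma card_polyEdge (a : Fin (ℓ + 1) → F) : #(polyEdge x enc a) = k := by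
  rw [polyEdge, card_image_of_injective _ fun i j h => (Prod.ext_iff.mp (enc.injective h)).1,
    card_univ, Fintype.card_fin]

/-- A set `W` inside some edge pins down the values of the polynomial at `#W` points. -/
lemma card_filter_subset_polyEdge_le [Fintype F] [DecidableEq F] (W : Finset ℕ) :
    #{a : Fin (ℓ + 1) → F | W ⊆ polyEdge x enc a} ≤ Fintype.card F ^ (ℓ + 1 - #W) := by
  rcases eq_empty_or_nonempty {a : Fin (ℓ + 1) → F | W ⊆ polyEdge x enc a} with h | ⟨a₀, ha₀⟩
  · simp [h]
  have hW₀ : W ⊆ polyEdge x enc a₀ := (mem_filter.mp ha₀).2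
  set I := univ.filter fun i : Fin k => enc (i, (toPoly a₀).eval (x i)) ∈ W
  have hWI : #W ≤ #I := by
    refine (card_le_card fun w hw => ?_).trans (card_image_le (s := I)
      (f := fun i => enc (i, (toPoly a₀).eval (x i))))
    obtain ⟨i, -, rfl⟩ := mem_image.mp (hW₀ hw)
    exact mem_image_of_mem _ (mem_filter.mpr ⟨mem_univ i, hw⟩)
  calc #{a : Fin (ℓ + 1) → F | W ⊆ polyEdge x enc a}
      ≤ #{a : Fin (ℓ + 1) → F | ∀ y ∈ I.map x, (toPoly a).eval y = (toPoly a₀).eval y} := by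
        refine card_le_card fun a ha => mem_filter.mpr ⟨mem_univ a, fun y hy => ?_⟩
        obtain ⟨i, hi, rfl⟩ := mem_map.mp hy
        obtain ⟨j, -, hj⟩ := mem_image.mp ((mem_filter.mp ha).2 (mem_filter.mp hi).2)
        obtain ⟨rfl, hval⟩ := Prod.ext_iff.mp (enc.injective hj)
        exact hval
    _ ≤ Fintype.card F ^ (ℓ + 1 - #(I.map x)) := card_filter_eval_eq_le _ _
    _ ≤ Fintype.card F ^ (ℓ + 1 - #W) :=
        Nat.pow_le_pow_right Fintype.card_pos (by rw [card_map]; omega)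

lemma polyEdge_injective [Fintype F] [DecidableEq F] (hℓk : ℓ < k) :
    Function.Injective (polyEdge (ℓ := ℓ) x enc) := by
  intro a b hab
  have h := card_filter_subset_polyEdge_le (ℓ := ℓ) x enc (polyEdge x enc a)
  rw [card_polyEdge, Nat.sub_eq_zero_of_le hℓk, pow_zero] at h
  exact card_le_one.mp h a (mem_filter.mpr ⟨mem_univ a, Subset.rfl⟩)
    b (mem_filter.mpr ⟨mem_univ b, hab.le⟩)

noncomputable def polyHypergraph [Fintype F] (ℓ : ℕ) : KHypergraph k where
  verts := univ.map enc
  edges := univ.image (polyEdge (ℓ := ℓ) x enc)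
  card_eq := by
    simp only [mem_image, mem_univ, true_and, forall_exists_index, forall_apply_eq_imp_iff]
    exact card_polyEdge x enc
  subset_verts := by
    simp only [mem_image, mem_univ, true_and, forall_exists_index, forall_apply_eq_imp_iff]
    exact fun a => image_subset_iff.mpr fun i _ => mem_map_of_mem enc (mem_univ _)

lemma card_verts_polyHypergraph [Fintype F] :
    #(polyHypergraph x enc ℓ).verts = k * Fintype.card F := by
  simp [polyHypergraph]

lemma card_edges_polyHypergraph [Fintype F] [DecidableEq F] (hℓk : ℓ < k) :
    #(polyHypergraph x enc ℓ).edges = Fintype.card F ^ (ℓ + 1) := by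
  simp [polyHypergraph, card_image_of_injective _ (polyEdge_injective x enc hℓk)]

lemma codegree_polyHypergraph_le [Fintype F] [DecidableEq F] (W : Finset ℕ) :
    codegree (polyHypergraph x enc ℓ).edges W ≤ Fintype.card F ^ (ℓ + 1 - #W) := by
  rw [codegree, polyHypergraph, filter_image]
  exact card_image_le.trans (card_filter_subset_polyEdge_le x enc W)

end PolynomialHypergraph

namespace KHypergraph

variable {k : ℕ}

lemma sizeRamsey_le {G H : KHypergraph k} (h : H.Arrows G) : G.sizeRamsey ≤ #H.edges :=
  Nat.sInf_le ⟨H, h, rfl⟩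

lemma sizeRamsey_eq_zero_of_verts_eq_empty (hk : 0 < k) {G : KHypergraph k}
    (hG : G.verts = ∅) : G.sizeRamsey = 0 := by
  have hE : G.edges = ∅ := eq_empty_of_forall_notMem fun E hE => by
    have hcard := G.card_eq E hE
    have hsub := G.subset_verts E hE
    rw [hG, subset_empty] at hsub
    rw [hsub, card_empty] at hcard
    omega
  refine Nat.le_zero.mp ((sizeRamsey_le (H := G) fun _ => ⟨id, true, ?_, by simp [hE]⟩).trans
    (by simp [hE]))
  exact ⟨by simp [hG], by simp [hG], by simp [hE]⟩

end KHypergraph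

theorem IsLTree.sizeRamsey_le_card_pow {k ℓ n : ℕ} {F : Type*} [Field F] [Fintype F]
    (hℓk : ℓ < k) (hkF : k ≤ Fintype.card F) (hF : 2 * (ℓ + 1) * (n + 1) * k ^ ℓ < Fintype.card F)
    {T : KHypergraph k} (hT : IsLTree k ℓ T) (hn : #T.verts ≤ n) :
    T.sizeRamsey ≤ Fintype.card F ^ (ℓ + 1) := by
  classical
  obtain ⟨x⟩ := Function.Embedding.nonempty_of_card_le (α := Fin k) (β := F) (by simpa using hkF)
  let enc : Fin k × F ↪ ℕ := (Fintype.equivFin _).toEmbedding.trans Fin.valEmbedding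
  have harrows := (polyHypergraph x enc ℓ).arrows_of_codegree_le (by omega)
    (card_verts_polyHypergraph x enc).le (card_edges_polyHypergraph x enc hℓk).ge
    (codegree_polyHypergraph_le x enc) hF hT hn
  exact (KHypergraph.sizeRamsey_le harrows).trans (card_edges_polyHypergraph x enc hℓk).le

theorem stmt1_general (k ℓ : ℕ) (h2 : ℓ < k) :
    ∃ C : ℝ, 0 < C ∧ ∀ n : ℕ, ∀ T : KHypergraph k, IsLTree k ℓ T → T.verts.card = n →
      (T.sizeRamsey : ℝ) ≤ C * (n : ℝ) ^ (ℓ + 1) := by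
  set K := 4 * (ℓ + 1) * k ^ ℓ + k with hK
  refine ⟨((2 * K : ℕ) : ℝ) ^ (ℓ + 1), pow_pos (by exact_mod_cast (by omega : 0 < 2 * K)) _,
    fun n T hT hn => ?_⟩
  rcases Nat.eq_zero_or_pos n with rfl | hn0
  · simp [KHypergraph.sizeRamsey_eq_zero_of_verts_eq_empty (by omega) (card_eq_zero.mp hn)]
  obtain ⟨q, hq, hKq, hq2K⟩ :=
    Nat.exists_prime_lt_and_le_two_mul (K * n) (Nat.mul_ne_zero (by omega) (by omega))
  have := Fact.mk hq
  have hKn : K ≤ K * n := Nat.le_mul_of_pos_right K hn0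
  have hcost : 2 * (ℓ + 1) * (n + 1) * k ^ ℓ ≤ K * n := by
    nlinarith [Nat.mul_le_mul_left ((ℓ + 1) * k ^ ℓ) hn0]
  have hle := hT.sizeRamsey_le_card_pow (F := ZMod q) h2 (by rw [ZMod.card]; omega)
    (by rw [ZMod.card]; omega) hn.le
  rw [ZMod.card] at hle
  calc (T.sizeRamsey : ℝ) ≤ ((2 * (K * n)) ^ (ℓ + 1) : ℕ) := by
        exact_mod_cast hle.trans (Nat.pow_le_pow_left hq2K _)
    _ = ((2 * K : ℕ) : ℝ) ^ (ℓ + 1) * (n : ℝ) ^ (ℓ + 1) := by push_cast; ring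

/-- For fixed `1 ≤ ℓ < k` there is a constant `C > 0` such that every
`k`-uniform `ℓ`-tree `T` on `n` vertices satisfies `R̂(T) ≤ C·n^{ℓ+1}`. -/
theorem stmt1 (k ℓ : ℕ) (h1 : 1 ≤ ℓ) (h2 : ℓ < k) :
    ∃ C : ℝ, 0 < C ∧ ∀ n : ℕ, ∀ T : KHypergraph k, IsLTree k ℓ T → T.verts.card = n →
      (T.sizeRamsey : ℝ) ≤ C * (n : ℝ) ^ (ℓ + 1) :=
  stmt1_general k ℓ h2
end

section
/- Let k ≥ 2 and let n > 2k−1 be such that 2k−2 divides n−1, and set a = (n−1)/(2k−2). Let T be the k-uniform star-like tree of order n consisting of a center vertex v and a arms P₁,…,P_a, where the i-th arm has the two edges {v, w₁ⁱ, w₂ⁱ, …, w_{k−1}ⁱ} and {w_{k−1}ⁱ, w_kⁱ, …, w_{2k−2}ⁱ}, and all vertices w_jⁱ (1 ≤ i ≤ a, 1 ≤ j ≤ 2k−2) are pairwise distinct. Then R̂(T) ≥ (1/3)·a² = (1/3)·((n−1)/(2k−2))². -/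
/-!
Given `H → T`, greedily collect vertices `C` of `H`, each new one lying in at least `a` edges that
miss the earlier ones, until every vertex lies in fewer than `a` edges missing `C`; then
`a * #C ≤ #H.edges`. Colour an edge by whether it meets `C`. The centre of `T` lies in `a` edges,
so a monochromatic copy of `T` cannot avoid `C`; hence every edge of the copy meets `C`, and the
`a` pairwise disjoint outer edges of the arms need `a` distinct vertices of `C`.

Since `sInf ∅ = 0`, the bound on `R̂(T)` also needs some hypergraph arrowing `T`: a large complete
one does. Call `w` `c`-rich in `U` if, whatever few vertices are forbidden, some `c`-coloured edge
consists of `w` and vertices of `U`. Every vertex is rich in some colour, and two rounds of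
majority give `c`, `U₁ ⊆ U₀` and a centre `v` that is `c`-rich in `U₁` while every vertex of `U₁`
is `c`-rich in `U₀`; the arms are then embedded greedily one after the other.
-/

open Finset

theorem Nat.mul_add_le_mul_of_lt {i j : ℕ} (m : ℕ) (h : i < j) : i * m + m ≤ j * m := by
  simpa [Nat.succ_mul] using Nat.mul_le_mul_right m h

def seqAppend (φ g : ℕ → ℕ) (n : ℕ) : ℕ → ℕ := fun x => if x < n then φ x else g (x - n)

section seqAppend

variable {φ g : ℕ → ℕ} {n m x : ℕ}

theorem seqAppend_of_lt (h : x < n) : seqAppend φ g n x = φ x := if_pos h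

@[simp]
theorem seqAppend_add (j : ℕ) : seqAppend φ g n (n + j) = g j := by
  simp [seqAppend]

theorem image_seqAppend_of_subset {s : Finset ℕ} (hs : s ⊆ range n) :
    s.image (seqAppend φ g n) = s.image φ :=
  image_congr fun _ hx => seqAppend_of_lt (mem_range.mp (hs hx))

theorem image_range_seqAppend :
    (range (n + m)).image (seqAppend φ g n) = (range n).image φ ∪ (range m).image g := by
  ext y
  simp only [mem_image, mem_range, mem_union]
  constructor
  · rintro ⟨x, hx, rfl⟩
    rcases Nat.lt_or_ge x n with h | h
    · exact .inl ⟨x, h, (seqAppend_of_lt h).symm⟩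
    · refine .inr ⟨x - n, by omega, ?_⟩
      rw [← seqAppend_add (φ := φ) (g := g) (n := n), Nat.add_sub_cancel' h]
  · rintro (⟨x, hx, rfl⟩ | ⟨j, hj, rfl⟩)
    · exact ⟨x, by omega, seqAppend_of_lt hx⟩
    · exact ⟨n + j, by omega, seqAppend_add j⟩

theorem injOn_seqAppend (hφ : Set.InjOn φ (range n)) (hg : Set.InjOn g (range m))
    (hd : Disjoint ((range n).image φ) ((range m).image g)) :
    Set.InjOn (seqAppend φ g n) (range (n + m)) := by
  have hsplit : ∀ x < n + m, (x < n ∧ seqAppend φ g n x = φ x) ∨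
      (n ≤ x ∧ x - n < m ∧ seqAppend φ g n x = g (x - n)) := by
    intro x hx
    by_cases h : x < n
    · exact .inl ⟨h, seqAppend_of_lt h⟩
    · exact .inr ⟨by omega, by omega, if_neg h⟩
  have hne : ∀ x < n, ∀ y < m, φ x ≠ g y := fun x hx y hy hxy =>
    disjoint_left.mp hd (mem_image_of_mem φ (mem_range.mpr hx))
      (hxy ▸ mem_image_of_mem g (mem_range.mpr hy))
  intro x hx y hy hxy
  simp only [coe_range, Set.mem_Iio] at hx hy
  rcases hsplit x hx with ⟨hx, ex⟩ | ⟨hx, hx', ex⟩ <;>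
    rcases hsplit y hy with ⟨hy, ey⟩ | ⟨hy, hy', ey⟩ <;> rw [ex, ey] at hxy
  · exact hφ (by simpa using hx) (by simpa using hy) hxy
  · exact absurd hxy (hne x hx _ hy')
  · exact absurd hxy.symm (hne y hy _ hx')
  · have := hg (by simpa using hx') (by simpa using hy') hxy
    omega

end seqAppend

theorem Finset.exists_injOn_range_image_eq (t : Finset ℕ) :
    ∃ g : ℕ → ℕ, Set.InjOn g (range #t) ∧ (range #t).image g = t := by
  refine ⟨fun j => if h : j < #t then t.orderEmbOfFin rfl ⟨j, h⟩ else 0, ?_, ?_⟩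
  · intro x hx y hy hxy
    simp only [coe_range, Set.mem_Iio] at hx hy
    simp only [dif_pos hx, dif_pos hy] at hxy
    simpa using (t.orderEmbOfFin rfl).injective hxy
  · ext y
    simp only [mem_image, mem_range]
    constructor
    · rintro ⟨j, hj, rfl⟩
      simp [dif_pos hj]
    · intro hy
      obtain ⟨⟨j, hj⟩, hjy⟩ : y ∈ Set.range (t.orderEmbOfFin rfl) := by
        rw [range_orderEmbOfFin]; exact hy
      exact ⟨j, hj, by simpa [dif_pos hj] using hjy⟩

namespace KHypergraph

theorem exists_hitting_set (E : Finset (Finset ℕ)) {a : ℕ} (ha : 0 < a) :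
    ∃ C : Finset ℕ, a * #C ≤ #E ∧ ∀ v, #{e ∈ E | v ∈ e ∧ Disjoint C e} < a := by
  induction h : #E using Nat.strong_induction_on generalizing E with
  | _ m ih =>
    by_cases hsmall : ∀ v, #{e ∈ E | v ∈ e} < a
    · refine ⟨∅, by simp, fun v => (card_le_card ?_).trans_lt (hsmall v)⟩
      intro e he
      simp only [mem_filter] at he ⊢
      exact ⟨he.1, he.2.1⟩
    push Not at hsmall
    obtain ⟨v, hv⟩ := hsmall
    have hsplit := card_filter_add_card_filter_not (s := E) (fun e => v ∈ e)
    obtain ⟨C, hC, hCv⟩ := ih _ (by omega) {e ∈ E | v ∉ e} rfl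
    refine ⟨insert v C, ?_, fun u => (card_le_card ?_).trans_lt (hCv u)⟩
    · have := card_insert_le v C
      nlinarith
    · intro e he
      simp only [mem_filter, disjoint_insert_left] at he ⊢
      exact ⟨⟨he.1, he.2.2.1⟩, he.2.1, he.2.2.2⟩

theorem degree_mul_card_le_card_edges_of_arrows {k : ℕ} {H T : KHypergraph k}
    (hH : H.Arrows T) (x₀ : ℕ) {M : Finset (Finset ℕ)} (hM : M ⊆ T.edges)
    (hMdisj : (M : Set (Finset ℕ)).PairwiseDisjoint id) :
    #{e ∈ T.edges | x₀ ∈ e} * #M ≤ #H.edges := by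
  set d := #{e ∈ T.edges | x₀ ∈ e}
  rcases Nat.eq_zero_or_pos d with hd | hd
  · simp [hd]
  obtain ⟨C, hC, hCdeg⟩ := exists_hitting_set H.edges hd
  obtain ⟨f, c, ⟨hinj, -, hedges⟩, hmono⟩ := hH fun e => decide (¬ Disjoint C e)
  have himage_inj : Set.InjOn (·.image f) {e | e ∈ T.edges} := fun e he e' he' hee' =>
    image_injOn_powerset_of_injOn hinj (by simpa using T.subset_verts e he)
      (by simpa using T.subset_verts e' he') hee'
  cases c with
  | false =>
    refine absurd (card_le_card_of_injOn (·.image f) ?_ ?_) (hCdeg (f x₀)).not_ge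
    · intro e he
      simp only [coe_filter, Set.mem_ofPred_eq] at he ⊢
      have := hmono e he.1
      simp only [decide_eq_false_iff_not, not_not] at this
      exact ⟨hedges e he.1, mem_image_of_mem f he.2, this⟩
    · exact himage_inj.mono fun e he => (mem_filter.mp he).1
  | true =>
    have hMC : #M ≤ #C := by
      refine card_le_card_of_forall_subsingleton (fun e u => u ∈ e.image f) ?_ ?_
      · intro e he
        have := hmono e (hM he)
        simp only [decide_eq_true_eq, not_disjoint_iff] at this
        obtain ⟨u, huC, hue⟩ := this
        exact ⟨u, huC, hue⟩
      · intro u _ e he e' he'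
        obtain ⟨x, hx, rfl⟩ := mem_image.mp he.2
        obtain ⟨y, hy, hxy⟩ := mem_image.mp he'.2
        have := hinj (T.subset_verts e' (hM he'.1) hy) (T.subset_verts e (hM he.1) hx) hxy
        subst this
        by_contra hne
        exact disjoint_left.mp (hMdisj he.1 he'.1 hne) hx hy
    calc d * #M ≤ d * #C := Nat.mul_le_mul_left d hMC
      _ ≤ #H.edges := hC

section Star

/-- Arm `i` occupies the vertices `i * (2 * K) + 1, …, i * (2 * K) + 2 * K`; its two edges share
`i * (2 * K) + K`. -/
def armInner (K i : ℕ) : Finset ℕ :=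
  insert 0 ((range K).image fun j => i * (2 * K) + 1 + j)

def armOuter (K i : ℕ) : Finset ℕ :=
  (range (K + 1)).image fun j => i * (2 * K) + K + j

def starArms (K a : ℕ) : Finset (Finset ℕ) :=
  (range a).biUnion fun i => {armInner K i, armOuter K i}

variable {K i j x : ℕ}

theorem mem_armInner : x ∈ armInner K i ↔ x = 0 ∨ i * (2 * K) < x ∧ x ≤ i * (2 * K) + K := by
  simp only [armInner, mem_insert, mem_image, mem_range]
  refine or_congr_right ⟨?_, fun h => ⟨x - (i * (2 * K) + 1), by omega, by omega⟩⟩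
  rintro ⟨j, hj, rfl⟩
  omega

theorem mem_armOuter : x ∈ armOuter K i ↔ i * (2 * K) + K ≤ x ∧ x ≤ i * (2 * K) + 2 * K := by
  simp only [armOuter, mem_image, mem_range]
  refine ⟨?_, fun h => ⟨x - (i * (2 * K) + K), by omega, by omega⟩⟩
  rintro ⟨j, hj, rfl⟩
  omega

theorem armInner_injective (hK : 1 ≤ K) : Function.Injective (armInner K) := by
  intro i j hij
  have hmem : i * (2 * K) + 1 ∈ armInner K j := hij ▸ mem_armInner.mpr (by omega)
  rw [mem_armInner] at hmem
  by_contra hne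
  rcases Nat.lt_or_gt_of_ne hne with h | h
  · have := Nat.mul_add_le_mul_of_lt (2 * K) h; omega
  · have := Nat.mul_add_le_mul_of_lt (2 * K) h; omega

theorem disjoint_armOuter (hK : 1 ≤ K) (hij : i ≠ j) : Disjoint (armOuter K i) (armOuter K j) := by
  rw [disjoint_left]
  intro x hi hj
  rw [mem_armOuter] at hi hj
  rcases Nat.lt_or_gt_of_ne hij with h | h
  · have := Nat.mul_add_le_mul_of_lt (2 * K) h; omega
  · have := Nat.mul_add_le_mul_of_lt (2 * K) h; omega

theorem armOuter_injective (hK : 1 ≤ K) : Function.Injective (armOuter K) := by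
  intro i j hij
  by_contra hne
  have hmem : i * (2 * K) + K ∈ armOuter K i := mem_armOuter.mpr (by omega)
  exact disjoint_left.mp (disjoint_armOuter hK hne) hmem (hij ▸ hmem)

theorem mul_le_card_edges_of_arrows_star {a : ℕ} (hK : 1 ≤ K) {H T : KHypergraph (K + 1)}
    (hE : T.edges = starArms K a) (hH : H.Arrows T) : a * a ≤ #H.edges := by
  have hdeg : a ≤ #{e ∈ T.edges | 0 ∈ e} := by
    simpa using card_le_card_of_injOn (s := range a) (armInner K)
      (fun i hi => by
        simp only [hE, starArms, coe_filter, Set.mem_ofPred_eq, mem_biUnion]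
        exact ⟨⟨i, Finset.mem_coe.mp hi, mem_insert_self _ _⟩, mem_insert_self _ _⟩)
      (armInner_injective hK).injOn
  have hM : (range a).image (armOuter K) ⊆ T.edges := by
    intro e he
    obtain ⟨i, hi, rfl⟩ := mem_image.mp he
    rw [hE, starArms, mem_biUnion]
    exact ⟨i, hi, by simp⟩
  have hMdisj : ((range a).image (armOuter K) : Set (Finset ℕ)).PairwiseDisjoint id := by
    rw [coe_image]
    exact fun _ ⟨i, _, hi⟩ _ ⟨j, _, hj⟩ hne =>
      hi ▸ hj ▸ disjoint_armOuter hK fun hij => hne (hi ▸ hj ▸ hij ▸ rfl)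
  have hMcard : #((range a).image (armOuter K)) = a := by
    rw [card_image_of_injective _ (armOuter_injective hK), card_range]
  calc a * a ≤ #{e ∈ T.edges | 0 ∈ e} * #((range a).image (armOuter K)) := by
        rw [hMcard]; exact Nat.mul_le_mul_right a hdeg
    _ ≤ #H.edges := degree_mul_card_le_card_edges_of_arrows hH 0 hM hMdisj

end Star

section Rich

def IsRich (χ : Finset ℕ → Bool) (K B : ℕ) (U : Finset ℕ) (c : Bool) (w : ℕ) : Prop :=
  ∀ S : Finset ℕ, #S ≤ B → ∃ t ⊆ U \ insert w S, #t = K ∧ χ (insert w t) = c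

variable {χ : Finset ℕ → Bool} {K B : ℕ}

/-- A witness `S₀` against `c`-richness forces every `(K + 1)`-set avoiding `S₀` to have
colour `!c`. -/
theorem isRich_or_isRich_not {U : Finset ℕ} (hU : 2 * B + K + 1 ≤ #U) (c : Bool) (w : ℕ) :
    IsRich χ K B U c w ∨ IsRich χ K B U (!c) w := by
  refine or_iff_not_imp_left.mpr fun hc S hS => ?_
  simp only [IsRich, not_forall, not_exists, not_and] at hc
  obtain ⟨S₀, hS₀, hS₀c⟩ := hc
  have hcard : K ≤ #(U \ insert w (S ∪ S₀)) := by
    have := le_card_sdiff (insert w (S ∪ S₀)) U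
    have := card_insert_le w (S ∪ S₀)
    have := card_union_le S S₀
    omega
  obtain ⟨t, ht, htK⟩ := exists_subset_card_eq hcard
  have hsub : ∀ S' ⊆ S ∪ S₀, t ⊆ U \ insert w S' :=
    fun S' hS' => ht.trans (sdiff_subset_sdiff subset_rfl (insert_subset_insert w hS'))
  refine ⟨t, hsub S subset_union_left, htK, ?_⟩
  exact Bool.eq_not_iff.mpr (hS₀c t (hsub S₀ subset_union_right) htK)

/-- Two rounds of majority: either some vertex is `c`-rich in the set of `c`-rich vertices,
or all of these are `!c`-rich among themselves. -/
theorem exists_isRich_nested (χ : Finset ℕ → Bool) (K B : ℕ) :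
    ∃ (c : Bool) (U₀ U₁ : Finset ℕ) (v : ℕ), U₀ ⊆ range (4 * (2 * B + K + 1)) ∧ U₁ ⊆ U₀ ∧
      v ∈ U₀ ∧ (∀ w ∈ U₁, IsRich χ K B U₀ c w) ∧ IsRich χ K B U₁ c v := by
  classical
  set N := 4 * (2 * B + K + 1)
  have hN : 2 * B + K + 1 ≤ #(range N) := by rw [card_range]; omega
  obtain ⟨c, hc⟩ : ∃ c, 2 * B + K + 1 ≤ #{w ∈ range N | IsRich χ K B (range N) c w} := by
    by_contra! h
    have hcover : range N ⊆ {w ∈ range N | IsRich χ K B (range N) true w} ∪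
        {w ∈ range N | IsRich χ K B (range N) false w} := by
      intro w hw
      simpa [mem_filter, hw] using isRich_or_isRich_not (χ := χ) hN true w
    have := (card_le_card hcover).trans (card_union_le _ _)
    have := h true
    have := h false
    rw [card_range] at *
    omega
  set U₁ := {w ∈ range N | IsRich χ K B (range N) c w}
  by_cases hv : ∃ v ∈ U₁, IsRich χ K B U₁ c v
  · obtain ⟨v, hvU₁, hv⟩ := hv
    exact ⟨c, range N, U₁, v, subset_rfl, filter_subset _ _, filter_subset _ _ hvU₁,
      fun w hw => (mem_filter.mp hw).2, hv⟩
  · push Not at hv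
    have hnot : ∀ w ∈ U₁, IsRich χ K B U₁ (!c) w := fun w hw =>
      (isRich_or_isRich_not hc c w).resolve_left (hv w hw)
    obtain ⟨v, hvU₁⟩ : U₁.Nonempty := card_pos.mp (by omega)
    exact ⟨!c, U₁, U₁, v, filter_subset _ _, subset_rfl, hvU₁, hnot, hnot v hvU₁⟩

end Rich

section Embedding

variable {K i j : ℕ}

theorem armInner_subset_range (h : j < i) : armInner K j ⊆ range (i * (2 * K) + 1) := by
  have := Nat.mul_add_le_mul_of_lt (2 * K) h
  intro x hx
  rw [mem_armInner] at hx
  rw [mem_range]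
  omega

theorem armOuter_subset_range (h : j < i) : armOuter K j ⊆ range (i * (2 * K) + 1) := by
  have := Nat.mul_add_le_mul_of_lt (2 * K) h
  intro x hx
  rw [mem_armOuter] at hx
  rw [mem_range]
  omega

theorem image_armInner {ψ g : ℕ → ℕ} (hψ : ∀ j < K, ψ (i * (2 * K) + 1 + j) = g j) :
    (armInner K i).image ψ = insert (ψ 0) ((range K).image g) := by
  rw [armInner, image_insert, image_image]
  exact congrArg _ (image_congr fun j hj => hψ j (mem_range.mp hj))

theorem image_armOuter {ψ h : ℕ → ℕ} (hψ : ∀ j < K, ψ (i * (2 * K) + K + 1 + j) = h j) :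
    (armOuter K i).image ψ = insert (ψ (i * (2 * K) + K)) ((range K).image h) := by
  simp only [armOuter, range_add_one', map_eq_image, image_insert, image_image, Nat.add_zero]
  refine congrArg _ (image_congr fun j hj => ?_)
  show ψ (i * (2 * K) + K + (j + 1)) = h j
  rw [← hψ j (mem_range.mp hj)]
  ring_nf

theorem image_armInner_seqAppend (φ g h : ℕ → ℕ) :
    (armInner K i).image (seqAppend (seqAppend φ g (i * (2 * K) + 1)) h (i * (2 * K) + 1 + K)) =
      insert (φ 0) ((range K).image g) := by
  rw [image_armInner fun j hj => ?_, seqAppend_of_lt (by omega), seqAppend_of_lt (by omega)]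
  rw [seqAppend_of_lt (by omega), seqAppend_add]

theorem image_armOuter_seqAppend (hK : 1 ≤ K) (φ g h : ℕ → ℕ) :
    (armOuter K i).image (seqAppend (seqAppend φ g (i * (2 * K) + 1)) h (i * (2 * K) + 1 + K)) =
      insert (g (K - 1)) ((range K).image h) := by
  rw [image_armOuter fun j _ => ?_, show i * (2 * K) + K = i * (2 * K) + 1 + (K - 1) by omega,
    seqAppend_of_lt (by omega), seqAppend_add]
  rw [show i * (2 * K) + K + 1 + j = i * (2 * K) + 1 + K + j by omega, seqAppend_add]

def IsMonoArmEmbedding (χ : Finset ℕ → Bool) (K : ℕ) (U : Finset ℕ) (c : Bool) (v i : ℕ)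
    (φ : ℕ → ℕ) : Prop :=
  φ 0 = v ∧ Set.InjOn φ (range (i * (2 * K) + 1)) ∧ (range (i * (2 * K) + 1)).image φ ⊆ U ∧
    ∀ j < i, χ ((armInner K j).image φ) = c ∧ χ ((armOuter K j).image φ) = c

variable {χ : Finset ℕ → Bool} {B : ℕ} {U₀ U₁ : Finset ℕ} {c : Bool} {v : ℕ} {φ : ℕ → ℕ}

theorem IsMonoArmEmbedding.extend (hK : 1 ≤ K) (hU : U₁ ⊆ U₀)
    (hrich : ∀ w ∈ U₁, IsRich χ K B U₀ c w) (hv : IsRich χ K B U₁ c v)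
    (hB : i * (2 * K) + 1 + K ≤ B) (hφ : IsMonoArmEmbedding χ K U₀ c v i φ) :
    ∃ ψ, IsMonoArmEmbedding χ K U₀ c v (i + 1) ψ := by
  obtain ⟨hφ0, hinj, hφU, hcol⟩ := hφ
  set n := i * (2 * K) + 1
  set S := (range n).image φ
  have hS : #S ≤ n := card_image_le.trans (card_range n).le
  obtain ⟨t, ht, htK, htc⟩ := hv S (by omega)
  obtain ⟨g, hg, hgt⟩ := exists_injOn_range_image_eq t
  rw [htK] at hg hgt
  set w := g (K - 1)
  have hw : w ∈ U₁ :=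
    (mem_sdiff.mp (ht (hgt ▸ mem_image_of_mem g (mem_range.mpr (by omega))))).1
  have hSt : (range (n + K)).image (seqAppend φ g n) = S ∪ t := by
    rw [image_range_seqAppend, hgt]
  obtain ⟨s, hs, hsK, hsc⟩ := hrich w hw (S ∪ t) ((card_union_le S t).trans (by omega))
  obtain ⟨h, hh, hhs⟩ := exists_injOn_range_image_eq s
  rw [hsK] at hh hhs
  set ψ := seqAppend (seqAppend φ g n) h (n + K)
  have hsucc : (i + 1) * (2 * K) + 1 = n + K + K := by rw [add_one_mul]; omega
  refine ⟨ψ, ?_, ?_, ?_, fun j hj => ?_⟩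
  · exact (seqAppend_of_lt (show 0 < n + K by omega)).trans
      ((seqAppend_of_lt (show 0 < n by omega)).trans hφ0)
  · rw [hsucc]
    refine injOn_seqAppend (injOn_seqAppend hinj hg ?_) hh ?_
    · rw [hgt]
      exact (disjoint_sdiff.mono_left (subset_insert v S)).mono_right ht
    · rw [hSt, hhs]
      exact (disjoint_sdiff.mono_left (subset_insert w _)).mono_right hs
  · rw [hsucc, image_range_seqAppend, hSt, hhs]
    exact union_subset (union_subset hφU ((ht.trans sdiff_subset).trans hU))
      (hs.trans sdiff_subset)
  rcases Nat.lt_succ_iff_lt_or_eq.mp hj with hj | rfl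
  · have hsub : range n ⊆ range (n + K) := range_subset_range.mpr (by omega)
    rw [image_seqAppend_of_subset ((armInner_subset_range hj).trans hsub),
      image_seqAppend_of_subset (armInner_subset_range hj),
      image_seqAppend_of_subset ((armOuter_subset_range hj).trans hsub),
      image_seqAppend_of_subset (armOuter_subset_range hj)]
    exact hcol j hj
  · rw [image_armInner_seqAppend, image_armOuter_seqAppend hK, hgt, hhs, hφ0]
    exact ⟨htc, hsc⟩

theorem isCopy_completeHG {k N : ℕ} {G : KHypergraph k} {f : ℕ → ℕ}
    (hinj : Set.InjOn f G.verts) (hmaps : G.verts.image f ⊆ range N) :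
    (completeHG k N).IsCopy G f := by
  refine ⟨hinj, fun x hx => hmaps (mem_image_of_mem f hx), fun e he => ?_⟩
  refine mem_powersetCard.mpr ⟨(image_subset_image (G.subset_verts e he)).trans hmaps, ?_⟩
  rw [card_image_of_injOn (hinj.mono (by simpa using G.subset_verts e he)), G.card_eq e he]

theorem completeHG_arrows_star {K a : ℕ} (hK : 1 ≤ K) {T : KHypergraph (K + 1)}
    (hV : T.verts = range (a * (2 * K) + 1)) (hE : T.edges = starArms K a) :
    (completeHG (K + 1) (4 * (2 * (a * (2 * K) + 1 + K) + K + 1))).Arrows T := by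
  intro χ
  obtain ⟨c, U₀, U₁, v, hU₀, hU, hv, hrich, hvrich⟩ :=
    exists_isRich_nested χ K (a * (2 * K) + 1 + K)
  have hembed : ∀ i ≤ a, ∃ φ, IsMonoArmEmbedding χ K U₀ c v i φ := by
    intro i
    induction i with
    | zero =>
      refine fun _ => ⟨fun _ => v, rfl, fun x hx y hy _ => ?_, by simpa using hv, by simp⟩
      simp only [zero_mul, zero_add, coe_range, Set.mem_Iio, Nat.lt_one_iff] at hx hy
      rw [hx, hy]
    | succ i ih =>
      intro hi
      obtain ⟨φ, hφ⟩ := ih (by omega)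
      have := Nat.mul_add_le_mul_of_lt (2 * K) (show i < a by omega)
      exact hφ.extend hK hU hrich hvrich (by omega)
  obtain ⟨φ, -, hinj, hφU, hcol⟩ := hembed a le_rfl
  refine ⟨φ, c, isCopy_completeHG (hV ▸ hinj) (hV ▸ hφU.trans hU₀), fun e he => ?_⟩
  simp only [hE, starArms, mem_biUnion, mem_range, mem_insert, mem_singleton] at he
  obtain ⟨i, hi, rfl | rfl⟩ := he
  exacts [(hcol i hi).1, (hcol i hi).2]

end Embedding

end KHypergraph

theorem stmt2_general (k a : ℕ) (hk : 2 ≤ k)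
    (T : KHypergraph k)
    (hV : T.verts = Finset.range (a * (2 * k - 2) + 1))
    (hE : T.edges =
      (Finset.range a).biUnion fun i =>
        {insert 0 ((Finset.range (k - 1)).image fun j => i * (2 * k - 2) + 1 + j),
         (Finset.range k).image fun j => i * (2 * k - 2) + (k - 1) + j}) :
    (1 / 3 : ℝ) * (a : ℝ) ^ 2 ≤ (T.sizeRamsey : ℝ) := by
  obtain ⟨K, rfl⟩ : ∃ K, k = K + 1 := ⟨k - 1, by omega⟩
  have hK : 1 ≤ K := by omega
  rw [show 2 * (K + 1) - 2 = 2 * K by omega] at hV hE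
  rw [Nat.add_sub_cancel] at hE
  have hne : {m | ∃ H : KHypergraph (K + 1), H.Arrows T ∧ H.edges.card = m}.Nonempty :=
    ⟨_, _, KHypergraph.completeHG_arrows_star hK hV hE, rfl⟩
  have hsq : a * a ≤ T.sizeRamsey := le_csInf hne fun m ⟨H, hH, hm⟩ =>
    hm ▸ KHypergraph.mul_le_card_edges_of_arrows_star hK hE hH
  have hsq' : (a : ℝ) * a ≤ T.sizeRamsey := by exact_mod_cast hsq
  nlinarith [sq_nonneg (a : ℝ)]

/-- Let `k ≥ 2`, `n > 2k−1` with `(2k−2) ∣ (n−1)` and `a = (n−1)/(2k−2)`.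
Let `T` be the `k`-uniform star-like tree of order `n` with center `0` and `a` arms, the
`i`-th arm having the two edges `{0, i(2k−2)+1, …, i(2k−2)+(k−1)}` and
`{i(2k−2)+(k−1), …, i(2k−2)+(2k−2)}` (all non-center vertices pairwise distinct).
Then `R̂(T) ≥ (1/3)·a²`. -/
theorem stmt2 (k n a : ℕ) (hk : 2 ≤ k) (hn : 2 * k - 1 < n)
    (hdvd : (2 * k - 2) ∣ (n - 1)) (ha : a = (n - 1) / (2 * k - 2))
    (T : KHypergraph k)
    (hV : T.verts = Finset.range (a * (2 * k - 2) + 1))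
    (hE : T.edges =
      (Finset.range a).biUnion fun i =>
        {insert 0 ((Finset.range (k - 1)).image fun j => i * (2 * k - 2) + 1 + j),
         (Finset.range k).image fun j => i * (2 * k - 2) + (k - 1) + j}) :
    (1 / 3 : ℝ) * (a : ℝ) ^ 2 ≤ (T.sizeRamsey : ℝ) :=
  stmt2_general k a hk T hV hE
end
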